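/- The maximal determinant at fixed precision, 1/s(p) = (8p − 8√((p−3/4)(p−3/16)) − 3)(8p + 8√((p−3/4)(p−3/16)) + 3)³/(108p⁴), satisfies 1/s(3/4) = 64 and is decreasing in p; in particular 1/s(p) ≤ 64 for all p ≥ 3/4. -/
import Mathlib


/-- The maximal QFIM determinant (inverse sloppiness) achievable at fixed precision `p`. -/
noncomputable def invSloppiness (p : ℝ) : ℝ :=
  (8 * p - 8 * Real.sqrt ((p - 3 / 4) * (p - 3 / 16)) - 3) *
    (8 * p + 8 * Real.sqrt ((p - 3 / 4) * (p - 3 / 16)) + 3) ^ 3 / (108 * p ^ 4)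

/-- The rational function `16384 x³ / (1+3x)⁴` is antitone on `[1, ∞)`. -/
lemma aux_g_antitone (x y : ℝ) (hx : 1 ≤ x) (hxy : x ≤ y) :
    16384 * y ^ 3 / (1 + 3 * y) ^ 4 ≤ 16384 * x ^ 3 / (1 + 3 * x) ^ 4 := by
  have hy : (1:ℝ) ≤ y := hx.trans hxy
  have hx0 : (0:ℝ) < 1 + 3 * x := by linarith
  have hy0 : (0:ℝ) < 1 + 3 * y := by linarith
  rw [div_le_div_iff₀ (by positivity) (by positivity)]
  have h1 : 0 ≤ x * y - 1 := by nlinarith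
  have e1 : 0 ≤ 81 * x ^ 2 * y ^ 2 * (x * y - 1) := by positivity
  have e2 : 0 ≤ 12 * x ^ 2 * y * (y - 1) := by
    have : 0 ≤ y - 1 := by linarith
    positivity
  have e3 : 0 ≤ 12 * x * y ^ 2 * (x - 1) := by
    have : 0 ≤ x - 1 := by linarith
    positivity
  have e4 : 0 ≤ x ^ 2 * (y ^ 2 - 1) := by nlinarith
  have e5 : 0 ≤ x * y * (x * y - 1) := by
    have hx0' : (0:ℝ) < x := by linarith
    have hy0' : (0:ℝ) < y := by linarith
    positivity
  have e6 : 0 ≤ y ^ 2 * (x ^ 2 - 1) := by nlinarith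
  have hG : 0 ≤ 81 * x ^ 3 * y ^ 3 - 54 * x ^ 2 * y ^ 2 - 12 * x ^ 2 * y - 12 * x * y ^ 2
      - x ^ 2 - x * y - y ^ 2 := by linarith
  have h2 : 0 ≤ y - x := by linarith
  nlinarith [mul_nonneg h2 hG]

/-- Key identity: `invSloppiness p = 16384 x³ / (1+3x)⁴` with
`x = (32 p + 4 R - 15)/9`, `R = 8 √((p-3/4)(p-3/16))`. -/
lemma aux_key (p : ℝ) (hp : 3 / 4 ≤ p) :
    invSloppiness p =
      16384 * ((32 * p + 4 * (8 * Real.sqrt ((p - 3 / 4) * (p - 3 / 16))) - 15) / 9) ^ 3 /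
        (1 + 3 * ((32 * p + 4 * (8 * Real.sqrt ((p - 3 / 4) * (p - 3 / 16))) - 15) / 9)) ^ 4 := by
  set R : ℝ := 8 * Real.sqrt ((p - 3 / 4) * (p - 3 / 16)) with hRdef
  have hprod : 0 ≤ (p - 3 / 4) * (p - 3 / 16) := by nlinarith
  have hR0 : 0 ≤ R := by positivity
  have hR2 : R ^ 2 = 64 * p ^ 2 - 60 * p + 9 := by
    have h := Real.sq_sqrt hprod
    rw [hRdef, mul_pow, h]
    ring
  have hp0 : (0:ℝ) < p := by linarith
  have hx1 : (1:ℝ) ≤ (32 * p + 4 * R - 15) / 9 := by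
    rw [le_div_iff₀ (by norm_num : (0:ℝ) < 9)]
    linarith
  have hden : (0:ℝ) < 1 + 3 * ((32 * p + 4 * R - 15) / 9) := by linarith
  rw [invSloppiness, show 8 * Real.sqrt ((p - 3 / 4) * (p - 3 / 16)) = R from rfl,
    div_eq_div_iff (by positivity) (by positivity)]
  linear_combination ((2304) - (768) * R^2 + (256/3) * R^4 - (256/81) * R^6 + (3072) * p
    - (12288) * p * R - (2048/3) * p * R^2 + (8192/3) * p * R^3 + (1024/27) * p * R^4
    - (4096/27) * p * R^5 - (28672) * p^2 - (16384) * p^2 * R + (274432/9) * p^2 * R^2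
    + (16384/9) * p^2 * R^3 - (81920/27) * p^2 * R^4 + (49152) * p^3 + (65536) * p^3 * R
    + (1048576/27) * p^3 * R^2 - (2621440/81) * p^3 * R^3 - (3407872/9) * p^4
    + (1048576/3) * p^4 * R - (5242880/27) * p^4 * R^2 + (29360128/27) * p^5
    - (16777216/27) * p^5 * R - (67108864/81) * p^6) * hR2

/-- `x(p)` is at least 1 and monotone. -/
lemma aux_x_ge (p : ℝ) (hp : 3 / 4 ≤ p) :
    (1:ℝ) ≤ (32 * p + 4 * (8 * Real.sqrt ((p - 3 / 4) * (p - 3 / 16))) - 15) / 9 := by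
  have h0 : 0 ≤ Real.sqrt ((p - 3 / 4) * (p - 3 / 16)) := Real.sqrt_nonneg _
  rw [le_div_iff₀ (by norm_num : (0:ℝ) < 9)]
  linarith

lemma aux_x_mono (p q : ℝ) (hp : 3 / 4 ≤ p) (hpq : p ≤ q) :
    (32 * p + 4 * (8 * Real.sqrt ((p - 3 / 4) * (p - 3 / 16))) - 15) / 9 ≤
      (32 * q + 4 * (8 * Real.sqrt ((q - 3 / 4) * (q - 3 / 16))) - 15) / 9 := by
  have hs : Real.sqrt ((p - 3 / 4) * (p - 3 / 16)) ≤
      Real.sqrt ((q - 3 / 4) * (q - 3 / 16)) := by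
    apply Real.sqrt_le_sqrt
    nlinarith
  apply div_le_div_of_nonneg_right ?_ (by norm_num)
  · linarith

/-- `1/s(3/4) = 64`, `1/s` is decreasing in `p` on `[3/4, ∞)`, and in particular
`1/s(p) ≤ 64` for all `p ≥ 3/4`. -/
theorem invSloppiness_max :
    invSloppiness (3 / 4) = 64 ∧
      (∀ p q : ℝ, 3 / 4 ≤ p → p ≤ q → invSloppiness q ≤ invSloppiness p) ∧
        (∀ p : ℝ, 3 / 4 ≤ p → invSloppiness p ≤ 64) := by
  have hval : invSloppiness (3 / 4) = 64 := by
    rw [invSloppiness, show ((3:ℝ) / 4 - 3 / 4) * (3 / 4 - 3 / 16) = 0 by norm_num,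
      Real.sqrt_zero]
    norm_num
  have hmono : ∀ p q : ℝ, 3 / 4 ≤ p → p ≤ q → invSloppiness q ≤ invSloppiness p := by
    intro p q hp hpq
    have hq : (3:ℝ) / 4 ≤ q := hp.trans hpq
    rw [aux_key p hp, aux_key q hq]
    exact aux_g_antitone _ _ (aux_x_ge p hp) (aux_x_mono p q hp hpq)
  exact ⟨hval, hmono, fun p hp => hval ▸ hmono (3 / 4) p le_rfl hp⟩
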